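/- arXiv:2103.13909 — 2 statements merged into one kernel-verified Lean document; each statement's English description precedes it below -/
import Mathlib

section
/- Let D : ℝⁿ → ℝⁿ be a differentiable denoiser that is locally homogeneous (J[D](x)·x = D(x)) and has symmetric Jacobian. Define ρ(x) = (1/(2ν)) xᵀ(x − D(x)) for ν > 0. Then ∇ρ(x) = (1/ν)(x − D(x)). -/
/-!
Write `ρ(y) = ⟪y, y - D y⟫ / (2ν)`. By the product rule its derivative at `x` in direction `u` is
`(⟪u, x - D x⟫ + ⟪x, u - J u⟫) / (2ν)` with `J = J[D](x)`. Symmetry of `J` moves it to the other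
side, `⟪x, J u⟫ = ⟪J x, u⟫`, and homogeneity `J x = D x` turns the two terms into the same one,
`⟪x - D x, u⟫`, so the gradient is `(x - D x) / ν`.
-/

open RealInnerProductSpace

variable {E : Type*} [NormedAddCommGroup E] [InnerProductSpace ℝ E]

theorem HasGradientAt.const_mul [CompleteSpace E] {f : E → ℝ} {f' x : E}
    (h : HasGradientAt f f' x) (c : ℝ) : HasGradientAt (fun y => c * f y) (c • f') x := by
  rw [hasGradientAt_iff_hasFDerivAt, map_smul]
  exact h.hasFDerivAt.const_mul c

theorem hasFDerivAt_inner_self_sub {D : E → E} {D' : E →L[ℝ] E} {x : E}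
    (hD : HasFDerivAt D D' x) (hsym : (D' : E →ₗ[ℝ] E).IsSymmetric) (hhom : D' x = D x) :
    HasFDerivAt (fun y => ⟪y, y - D y⟫) (innerSL ℝ ((2 : ℝ) • (x - D x))) x := by
  refine ((hasFDerivAt_id x).inner ℝ ((hasFDerivAt_id x).sub hD)).congr_fderiv ?_
  ext u
  have hmove : ⟪x, D' u⟫ = ⟪D x, u⟫ := by rw [← hhom]; exact (hsym x u).symm
  simp only [ContinuousLinearMap.comp_apply, ContinuousLinearMap.prod_apply,
    ContinuousLinearMap.id_apply, sub_apply, fderivInnerCLM_apply,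
    innerSL_apply_apply, id_eq, Pi.sub_apply]
  rw [inner_sub_right, hmove, inner_sub_right u, real_inner_comm x u, real_inner_comm (D x) u,
    real_inner_smul_left, inner_sub_left]
  ring

theorem hasGradientAt_inner_self_sub [CompleteSpace E] {D : E → E} {D' : E →L[ℝ] E} {x : E}
    (hD : HasFDerivAt D D' x) (hsym : (D' : E →ₗ[ℝ] E).IsSymmetric) (hhom : D' x = D x) :
    HasGradientAt (fun y => ⟪y, y - D y⟫) ((2 : ℝ) • (x - D x)) x := by
  rw [hasGradientAt_iff_hasFDerivAt]
  exact hasFDerivAt_inner_self_sub hD hsym hhom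

theorem stmt10_general {n : ℕ} (D : EuclideanSpace ℝ (Fin n) → EuclideanSpace ℝ (Fin n))
    (hD : Differentiable ℝ D) (ν : ℝ)
    (hSym : ∀ x u v, (inner ℝ (fderiv ℝ D x u) v : ℝ) = inner ℝ u (fderiv ℝ D x v))
    (hHom : ∀ x, fderiv ℝ D x x = D x) :
    ∀ x, gradient (fun x => (1 / (2 * ν)) * (inner ℝ x (x - D x) : ℝ)) x
      = (1 / ν) • (x - D x) := by
  intro x
  have hρ := (hasGradientAt_inner_self_sub (hD x).hasFDerivAt (hSym x) (hHom x)).const_mul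
    (1 / (2 * ν))
  rw [hρ.gradient, smul_smul]
  congr 1
  ring

/-- RED gradient identity: for a differentiable denoiser `D` with symmetric Jacobian and
`J[D](x)x = D(x)`, the regularizer `ρ(x) = (1/(2ν))⟨x, x − D(x)⟩` has gradient
`∇ρ(x) = (1/ν)(x − D(x))`. -/
theorem stmt10 {n : ℕ} (D : EuclideanSpace ℝ (Fin n) → EuclideanSpace ℝ (Fin n))
    (hD : Differentiable ℝ D) (ν : ℝ) (hν : 0 < ν)
    (hSym : ∀ x u v, (inner ℝ (fderiv ℝ D x u) v : ℝ) = inner ℝ u (fderiv ℝ D x v))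
    (hHom : ∀ x, fderiv ℝ D x x = D x) :
    ∀ x, gradient (fun x => (1 / (2 * ν)) * (inner ℝ x (x - D x) : ℝ)) x
      = (1 / ν) • (x - D x) :=
  stmt10_general D hD ν hSym hHom
end

section
/- Let H, H̄ ∈ ℝ^{n×n} be symmetric with H̄ positive definite, ε ∈ (0,1), κ = κ(H̄), and suppose ‖H − H̄‖ ≤ ε‖H̄‖ with εκ < 1/2. Then H is invertible and for any v ∈ ℝⁿ and stationary point x* of a C² function g with L-Lipschitz Hessian H̄ = ∇²g(x), the single exact-Newton-type error satisfies ‖x − H⁻¹∇g(x) − x*‖ ≤ [1/((1−2εκ)λ_min(H̄))] · ( (L/2)‖x − x*‖² + ε λ_max(H̄)‖x − x*‖ ). -/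
open Matrix

/-- Spectral (ℓ²) operator norm of a square real matrix. -/
noncomputable def opNorm {n : ℕ} (M : Matrix (Fin n) (Fin n) ℝ) : ℝ :=
  ‖LinearMap.toContinuousLinearMap (Matrix.toEuclideanLin M)‖

/-!
The error of the step is `H⁻¹ (H (x - x*) - ∇g x)`, and
`H (x - x*) - ∇g x = (H - H̄)(x - x*) + (∇g x* - ∇g x - H̄ (x* - x))`.
The first term is at most `ε λ_max ‖x - x*‖` since `‖H̄‖ = λ_max`, the second at most
`(L/2) ‖x - x*‖²` by the Lipschitz bound on the Hessian. In an eigenbasis of `H̄` one reads off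
`‖H̄ v‖ ≥ λ_min ‖v‖`, so `‖H v‖ ≥ (λ_min - ε λ_max) ‖v‖ ≥ (1 - 2εκ) λ_min ‖v‖`: this makes `H`
invertible with `‖H⁻¹‖ ≤ 1 / ((1 - 2εκ) λ_min)`.
-/

namespace Matrix.IsHermitian

variable {𝕜 n : Type*} [RCLike 𝕜] [Fintype n] [DecidableEq n] {A : Matrix n n 𝕜}

lemma toEuclideanCLM_eigenvectorBasis (hA : A.IsHermitian) (i : n) :
    toEuclideanCLM (𝕜 := 𝕜) A (hA.eigenvectorBasis i) =
      (hA.eigenvalues i : 𝕜) • hA.eigenvectorBasis i := by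
  ext j
  rw [ofLp_toEuclideanCLM, hA.mulVec_eigenvectorBasis, WithLp.ofLp_smul,
    RCLike.real_smul_eq_coe_smul (K := 𝕜)]

lemma repr_toEuclideanCLM (hA : A.IsHermitian) (v : EuclideanSpace 𝕜 n) (i : n) :
    hA.eigenvectorBasis.repr (toEuclideanCLM (𝕜 := 𝕜) A v) i =
      hA.eigenvalues i * hA.eigenvectorBasis.repr v i := by
  have hsymm : (toEuclideanCLM (𝕜 := 𝕜) A : EuclideanSpace 𝕜 n →ₗ[𝕜] _).IsSymmetric :=
    isSymmetric_toEuclideanLin_iff.mpr hA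
  simp only [OrthonormalBasis.repr_apply_apply]
  rw [← ContinuousLinearMap.coe_coe, ← hsymm, ContinuousLinearMap.coe_coe,
    toEuclideanCLM_eigenvectorBasis, inner_smul_left, RCLike.conj_ofReal]

lemma norm_toEuclideanCLM_apply_sq (hA : A.IsHermitian) (v : EuclideanSpace 𝕜 n) :
    ‖toEuclideanCLM (𝕜 := 𝕜) A v‖ ^ 2 =
      ∑ i, (hA.eigenvalues i) ^ 2 * ‖hA.eigenvectorBasis.repr v i‖ ^ 2 := by
  rw [← hA.eigenvectorBasis.repr.norm_map, EuclideanSpace.norm_sq_eq]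
  simp [repr_toEuclideanCLM, mul_pow]

lemma norm_toEuclideanCLM_apply_le (hA : A.IsHermitian) {Λ : ℝ} (hΛ : 0 ≤ Λ)
    (h : ∀ i, |hA.eigenvalues i| ≤ Λ) (v : EuclideanSpace 𝕜 n) :
    ‖toEuclideanCLM (𝕜 := 𝕜) A v‖ ≤ Λ * ‖v‖ := by
  refine le_of_sq_le_sq ?_ (by positivity)
  rw [hA.norm_toEuclideanCLM_apply_sq, mul_pow, ← hA.eigenvectorBasis.repr.norm_map v,
    EuclideanSpace.norm_sq_eq, Finset.mul_sum]
  gcongr ∑ _i, ?_ * _ with i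
  simpa only [sq_abs] using pow_le_pow_left₀ (abs_nonneg _) (h i) 2

lemma le_norm_toEuclideanCLM_apply (hA : A.IsHermitian) {c : ℝ} (hc : 0 ≤ c)
    (h : ∀ i, c ≤ |hA.eigenvalues i|) (v : EuclideanSpace 𝕜 n) :
    c * ‖v‖ ≤ ‖toEuclideanCLM (𝕜 := 𝕜) A v‖ := by
  refine le_of_sq_le_sq ?_ (norm_nonneg _)
  rw [hA.norm_toEuclideanCLM_apply_sq, mul_pow, ← hA.eigenvectorBasis.repr.norm_map v,
    EuclideanSpace.norm_sq_eq, Finset.mul_sum]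
  gcongr ∑ _i, ?_ * _ with i
  simpa only [sq_abs] using pow_le_pow_left₀ hc (h i) 2

end Matrix.IsHermitian

namespace Matrix.PosDef

open scoped ComplexOrder

variable {𝕜 n : Type*} [RCLike 𝕜] [Fintype n] [DecidableEq n] {A : Matrix n n 𝕜}

lemma iInf_eigenvalues_pos [Nonempty n] (hA : A.PosDef) : 0 < ⨅ i, hA.1.eigenvalues i := by
  obtain ⟨i, hi⟩ := exists_eq_ciInf_of_finite (f := hA.1.eigenvalues)
  exact hi ▸ hA.eigenvalues_pos i

lemma norm_toEuclideanCLM_le_iSup_eigenvalues (hA : A.PosDef) :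
    ‖toEuclideanCLM (𝕜 := 𝕜) A‖ ≤ ⨆ i, hA.1.eigenvalues i := by
  have hpos := hA.eigenvalues_pos
  refine ContinuousLinearMap.opNorm_le_bound _ (Real.iSup_nonneg fun i => (hpos i).le) ?_
  refine hA.1.norm_toEuclideanCLM_apply_le (Real.iSup_nonneg fun i => (hpos i).le) fun i => ?_
  rw [abs_of_pos (hpos i)]
  exact le_ciSup (Finite.bddAbove_range _) i

lemma iInf_eigenvalues_mul_norm_le (hA : A.PosDef) (v : EuclideanSpace 𝕜 n) :
    (⨅ i, hA.1.eigenvalues i) * ‖v‖ ≤ ‖toEuclideanCLM (𝕜 := 𝕜) A v‖ := by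
  have hpos := hA.eigenvalues_pos
  refine hA.1.le_norm_toEuclideanCLM_apply (Real.iInf_nonneg fun i => (hpos i).le) (fun i => ?_) v
  rw [abs_of_pos (hpos i)]
  exact ciInf_le (Finite.bddBelow_range _) i

end Matrix.PosDef

lemma ContinuousLinearMap.sub_mul_norm_le_norm_apply_of_norm_sub_le {𝕜 E F : Type*}
    [NontriviallyNormedField 𝕜] [NormedAddCommGroup E] [NormedSpace 𝕜 E]
    [NormedAddCommGroup F] [NormedSpace 𝕜 F] {A B : E →L[𝕜] F} {c δ : ℝ}
    (hA : ∀ v, c * ‖v‖ ≤ ‖A v‖) (hAB : ‖B - A‖ ≤ δ) (v : E) :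
    (c - δ) * ‖v‖ ≤ ‖B v‖ :=
  calc (c - δ) * ‖v‖ ≤ ‖A v‖ - ‖B - A‖ * ‖v‖ := by
        nlinarith [hA v, norm_nonneg v]
    _ ≤ ‖A v‖ - ‖(B - A) v‖ := by gcongr; exact (B - A).le_opNorm v
    _ ≤ ‖B v‖ := by
        rw [_root_.sub_apply]
        linarith [norm_sub_norm_le (A v) (B v), norm_sub_rev (B v) (A v)]

namespace Matrix

variable {𝕜 n : Type*} [RCLike 𝕜] [Fintype n] [DecidableEq n] {M : Matrix n n 𝕜} {c : ℝ}

lemma isUnit_det_of_mul_norm_le_norm_toEuclideanCLM_apply (hc : 0 < c)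
    (h : ∀ v, c * ‖v‖ ≤ ‖toEuclideanCLM (𝕜 := 𝕜) M v‖) : IsUnit M.det := by
  refine isUnit_iff_ne_zero.mpr fun hdet => ?_
  obtain ⟨v, hv, hMv⟩ := exists_mulVec_eq_zero_iff.mpr hdet
  have hbound := h (WithLp.toLp 2 v)
  rw [toEuclideanCLM_toLp, hMv, WithLp.toLp_zero, norm_zero] at hbound
  exact hv (by simpa using nonpos_of_mul_nonpos_right hbound hc)

lemma norm_toEuclideanCLM_inv_le (hc : 0 < c)
    (h : ∀ v, c * ‖v‖ ≤ ‖toEuclideanCLM (𝕜 := 𝕜) M v‖) :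
    ‖toEuclideanCLM (𝕜 := 𝕜) M⁻¹‖ ≤ c⁻¹ := by
  have hdet := isUnit_det_of_mul_norm_le_norm_toEuclideanCLM_apply hc h
  refine ContinuousLinearMap.opNorm_le_bound _ (inv_nonneg.mpr hc.le) fun z => ?_
  have hz := h (toEuclideanCLM (𝕜 := 𝕜) M⁻¹ z)
  rw [← mul_apply_eq_comp, ← map_mul, mul_nonsing_inv M hdet, map_one, one_apply_eq_self] at hz
  rw [inv_mul_eq_div, le_div_iff₀ hc]
  linarith

end Matrix

theorem ContDiff.differentiable_gradient {F : Type*} [NormedAddCommGroup F]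
    [InnerProductSpace ℝ F] [CompleteSpace F] {g : F → ℝ} (hg : ContDiff ℝ 2 g) :
    Differentiable ℝ (gradient g) :=
  (InnerProductSpace.toDual ℝ F).symm.differentiable.comp
    ((hg.fderiv_right (m := 1) (by norm_num)).differentiable one_ne_zero)

section Taylor

variable {E F : Type*} [NormedAddCommGroup E] [NormedSpace ℝ E]
  [NormedAddCommGroup F] [NormedSpace ℝ F] {f : E → F} {L : ℝ} {x : E}

theorem norm_sub_sub_fderiv_apply_le_of_lipschitz_fderiv (hf : Differentiable ℝ f)
    (hL : ∀ y, ‖fderiv ℝ f y - fderiv ℝ f x‖ ≤ L * ‖y - x‖) (y : E) :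
    ‖f y - f x - fderiv ℝ f x (y - x)‖ ≤ L / 2 * ‖y - x‖ ^ 2 := by
  set d := y - x
  set φ : ℝ → F := fun t => f (x + t • d) - f x - t • fderiv ℝ f x d
  have hφ : ∀ t, HasDerivAt φ (fderiv ℝ f (x + t • d) d - fderiv ℝ f x d) t := fun t => by
    have hline : HasDerivAt (fun s : ℝ => x + s • d) d t := by
      simpa using ((hasDerivAt_id t).smul_const d).const_add x
    have hlin : HasDerivAt (fun s : ℝ => s • fderiv ℝ f x d) (fderiv ℝ f x d) t := by
      simpa using (hasDerivAt_id t).smul_const (fderiv ℝ f x d)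
    exact (((hf _).hasFDerivAt.comp_hasDerivAt t hline).sub_const (f x)).sub hlin
  have hbound : ∀ t ∈ Set.Ico (0 : ℝ) 1,
      ‖fderiv ℝ f (x + t • d) d - fderiv ℝ f x d‖ ≤ L * ‖d‖ ^ 2 * t := fun t ht =>
    calc ‖fderiv ℝ f (x + t • d) d - fderiv ℝ f x d‖
        ≤ ‖fderiv ℝ f (x + t • d) - fderiv ℝ f x‖ * ‖d‖ := by
          rw [← _root_.sub_apply]; exact ContinuousLinearMap.le_opNorm _ _
      _ ≤ L * ‖t • d‖ * ‖d‖ := by gcongr; simpa using hL (x + t • d)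
      _ = L * ‖d‖ ^ 2 * t := by rw [norm_smul, Real.norm_of_nonneg ht.1]; ring
  -- Fencing `‖φ‖` by `B t = L ‖d‖² t² / 2` rather than by a linear bound gives the factor `1/2`.
  have hφ1 := image_norm_le_of_norm_deriv_right_le_deriv_boundary
    (fun t _ => (hφ t).continuousAt.continuousWithinAt) (fun t _ => (hφ t).hasDerivWithinAt)
    (B := fun t => L * ‖d‖ ^ 2 / 2 * t ^ 2) (by simp [φ])
    (B' := fun t => L * ‖d‖ ^ 2 * t)
    (fun t => ((hasDerivAt_pow 2 t).const_mul (L * ‖d‖ ^ 2 / 2)).congr_deriv (by ring))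
    hbound (Set.right_mem_Icc.mpr zero_le_one)
  have hφ1_eq : φ 1 = f y - f x - fderiv ℝ f x d := by simp [φ, d]
  rw [← hφ1_eq]
  convert hφ1 using 1
  ring

end Taylor

theorem norm_sub_newton_step_le {E : Type*} [NormedAddCommGroup E] [NormedSpace ℝ E]
    {f : E → E} {L δ K : ℝ} {x xs : E} (hf : Differentiable ℝ f)
    (hL : ∀ y, ‖fderiv ℝ f y - fderiv ℝ f x‖ ≤ L * ‖y - x‖) (hxs : f xs = 0)
    {A Ainv : E →L[ℝ] E} (hinv : ∀ v, Ainv (A v) = v)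
    (hA : ‖A - fderiv ℝ f x‖ ≤ δ) (hK : ‖Ainv‖ ≤ K) :
    ‖x - Ainv (f x) - xs‖ ≤ K * (L / 2 * ‖x - xs‖ ^ 2 + δ * ‖x - xs‖) := by
  have herr : x - Ainv (f x) - xs =
      Ainv ((A - fderiv ℝ f x) (x - xs) + (f xs - f x - fderiv ℝ f x (xs - x))) :=
    calc x - Ainv (f x) - xs = Ainv (A (x - xs)) - Ainv (f x) := by rw [hinv]; abel
      _ = Ainv (A (x - xs) - f x) := (map_sub ..).symm
      _ = _ := by
        rw [hxs, show xs - x = -(x - xs) by abel, map_neg, _root_.sub_apply]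
        abel_nf
  have htaylor := norm_sub_sub_fderiv_apply_le_of_lipschitz_fderiv hf hL xs
  rw [norm_sub_rev xs x] at htaylor
  have hK0 : 0 ≤ K := (norm_nonneg _).trans hK
  rw [herr]
  calc _ ≤ ‖Ainv‖ * ‖(A - fderiv ℝ f x) (x - xs) + (f xs - f x - fderiv ℝ f x (xs - x))‖ :=
        Ainv.le_opNorm _
    _ ≤ K * (‖A - fderiv ℝ f x‖ * ‖x - xs‖ + L / 2 * ‖x - xs‖ ^ 2) := by
        gcongr
        exact (norm_add_le _ _).trans (add_le_add ((A - fderiv ℝ f x).le_opNorm _) htaylor)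
    _ ≤ K * (L / 2 * ‖x - xs‖ ^ 2 + δ * ‖x - xs‖) := by rw [add_comm]; gcongr

theorem stmt18_general {n : ℕ} (hn : 0 < n)
    (g : EuclideanSpace ℝ (Fin n) → ℝ) (hg : ContDiff ℝ 2 g) (L : ℝ)
    (hL : ∀ w z, ‖fderiv ℝ (gradient g) w - fderiv ℝ (gradient g) z‖ ≤ L * ‖w - z‖)
    (x xs : EuclideanSpace ℝ (Fin n)) (hxs : gradient g xs = 0)
    (H Hb : Matrix (Fin n) (Fin n) ℝ) (hHb : Hb.PosDef)
    (hHess : ∀ v : EuclideanSpace ℝ (Fin n),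
      fderiv ℝ (gradient g) x v =
        (EuclideanSpace.equiv (Fin n) ℝ).symm (Hb *ᵥ (EuclideanSpace.equiv (Fin n) ℝ) v))
    (ε : ℝ) (hε : 0 < ε)
    (hsk : opNorm (H - Hb) ≤ ε * opNorm Hb)
    (hκ : 2 * ε * ((⨆ i, hHb.1.eigenvalues i) / (⨅ i, hHb.1.eigenvalues i)) < 1) :
    IsUnit H.det ∧
    ‖x - (EuclideanSpace.equiv (Fin n) ℝ).symm
          (H⁻¹ *ᵥ (EuclideanSpace.equiv (Fin n) ℝ) (gradient g x)) - xs‖ ≤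
      (1 / ((1 - 2 * ε * ((⨆ i, hHb.1.eigenvalues i) / (⨅ i, hHb.1.eigenvalues i))) *
          (⨅ i, hHb.1.eigenvalues i))) *
        ((L / 2) * ‖x - xs‖ ^ 2 + ε * (⨆ i, hHb.1.eigenvalues i) * ‖x - xs‖) := by
  have : Nonempty (Fin n) := ⟨⟨0, hn⟩⟩
  set T := toEuclideanCLM (𝕜 := ℝ) (n := Fin n)
  set lmin := ⨅ i, hHb.1.eigenvalues i
  set lmax := ⨆ i, hHb.1.eigenvalues i
  have hlmin : 0 < lmin := hHb.iInf_eigenvalues_pos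
  have hlmax : 0 ≤ lmax := Real.iSup_nonneg fun i => (hHb.eigenvalues_pos i).le
  have hc : (1 - 2 * ε * (lmax / lmin)) * lmin = lmin - 2 * ε * lmax := by field_simp
  have hcpos : 0 < lmin - 2 * ε * lmax := by
    rw [← hc]; exact mul_pos (by linarith) hlmin
  have hHess' : fderiv ℝ (gradient g) x = T Hb := ContinuousLinearMap.ext hHess
  have hsketch : ‖T H - T Hb‖ ≤ ε * lmax := by
    rw [← map_sub]
    exact hsk.trans (by gcongr; exact hHb.norm_toEuclideanCLM_le_iSup_eigenvalues)
  have hlow : ∀ v, (lmin - 2 * ε * lmax) * ‖v‖ ≤ ‖T H v‖ := fun v =>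
    calc (lmin - 2 * ε * lmax) * ‖v‖ ≤ (lmin - ε * lmax) * ‖v‖ :=
          mul_le_mul_of_nonneg_right (by linarith [mul_nonneg hε.le hlmax]) (norm_nonneg v)
      _ ≤ ‖T H v‖ := ContinuousLinearMap.sub_mul_norm_le_norm_apply_of_norm_sub_le
          hHb.iInf_eigenvalues_mul_norm_le hsketch v
  have hdet := isUnit_det_of_mul_norm_le_norm_toEuclideanCLM_apply hcpos hlow
  refine ⟨hdet, ?_⟩
  change ‖x - T H⁻¹ (gradient g x) - xs‖ ≤ _
  rw [hc, one_div]
  refine norm_sub_newton_step_le hg.differentiable_gradient (fun y => hL y x) hxs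
    (fun v => ?_) (hHess' ▸ hsketch) (norm_toEuclideanCLM_inv_le hcpos hlow)
  rw [← mul_apply_eq_comp, ← map_mul, nonsing_inv_mul H hdet, map_one, one_apply_eq_self]

/-- Exact Newton-type step with a sketched Hessian `H` approximating `H̄ = ∇²g(x)`:
if `‖H − H̄‖ ≤ ε‖H̄‖` and `2εκ(H̄) < 1`, then `H` is invertible and
`‖x − H⁻¹∇g(x) − x*‖ ≤ [1/((1−2εκ)λ_min(H̄))]((L/2)‖x−x*‖² + ελ_max(H̄)‖x−x*‖)`. -/
theorem stmt18 {n : ℕ} (hn : 0 < n)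
    (g : EuclideanSpace ℝ (Fin n) → ℝ) (hg : ContDiff ℝ 2 g) (L : ℝ)
    (hL : ∀ w z, ‖fderiv ℝ (gradient g) w - fderiv ℝ (gradient g) z‖ ≤ L * ‖w - z‖)
    (x xs : EuclideanSpace ℝ (Fin n)) (hxs : gradient g xs = 0)
    (H Hb : Matrix (Fin n) (Fin n) ℝ) (hHsym : H.IsHermitian) (hHb : Hb.PosDef)
    (hHess : ∀ v : EuclideanSpace ℝ (Fin n),
      fderiv ℝ (gradient g) x v =
        (EuclideanSpace.equiv (Fin n) ℝ).symm (Hb *ᵥ (EuclideanSpace.equiv (Fin n) ℝ) v))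
    (ε : ℝ) (hε : 0 < ε) (hε1 : ε < 1)
    (hsk : opNorm (H - Hb) ≤ ε * opNorm Hb)
    (hκ : 2 * ε * ((⨆ i, hHb.1.eigenvalues i) / (⨅ i, hHb.1.eigenvalues i)) < 1) :
    IsUnit H.det ∧
    ‖x - (EuclideanSpace.equiv (Fin n) ℝ).symm
          (H⁻¹ *ᵥ (EuclideanSpace.equiv (Fin n) ℝ) (gradient g x)) - xs‖ ≤
      (1 / ((1 - 2 * ε * ((⨆ i, hHb.1.eigenvalues i) / (⨅ i, hHb.1.eigenvalues i))) *
          (⨅ i, hHb.1.eigenvalues i))) *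
        ((L / 2) * ‖x - xs‖ ^ 2 + ε * (⨆ i, hHb.1.eigenvalues i) * ‖x - xs‖) :=
  stmt18_general hn g hg L hL x xs hxs H Hb hHb hHess ε hε hsk hκ
end
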